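/- Every BP-measurable linearly continuous function f : X → Y from a Baire topological vector space X over ℝ to a Tychonoff (completely regular Hausdorff) space Y is conically quasi-continuous. -/

import Mathlib

open Topology Filter Set TopologicalSpace

section Definitions

variable {X Y : Type*}

/-- A set `U` is functionally open if it is the preimage of an open set of `ℝ`
under a continuous real-valued function. -/
def FunctionallyOpen [TopologicalSpace Y] (U : Set Y) : Prop :=
  ∃ g : Y → ℝ, Continuous g ∧ ∃ V : Set ℝ, IsOpen V ∧ U = g ⁻¹' V

/-- A set is `Fσ` if it is a countable union of closed sets. -/
def IsFSigma [TopologicalSpace X] (s : Set X) : Prop :=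
  ∃ F : ℕ → Set X, (∀ n, IsClosed (F n)) ∧ s = ⋃ n, F n

/-- A function is `Fσ`-measurable if preimages of functionally open sets are `Fσ`. -/
def FSigmaMeasurable [TopologicalSpace X] [TopologicalSpace Y] (f : X → Y) : Prop :=
  ∀ U : Set Y, FunctionallyOpen U → IsFSigma (f ⁻¹' U)

/-- A set has the Baire property if its symmetric difference with some open set is meager. -/
def HasBaireProperty [TopologicalSpace X] (A : Set X) : Prop :=
  ∃ O : Set X, IsOpen O ∧ IsMeagre (symmDiff O A)

/-- A function is BP-measurable if preimages of functionally open sets have the Baire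
property. -/
def BPMeasurable [TopologicalSpace X] [TopologicalSpace Y] (f : X → Y) : Prop :=
  ∀ U : Set Y, FunctionallyOpen U → HasBaireProperty (f ⁻¹' U)

/-- A function on a topological vector space is linearly continuous if its restriction to
every affine line is continuous. -/
def LinearlyContinuous [AddCommGroup X] [Module ℝ X] [TopologicalSpace X] [TopologicalSpace Y]
    (f : X → Y) : Prop :=
  ∀ x v : X, Continuous fun t : ℝ => f (x + t • v)

/-- A function is quasi-continuous if for every point `x`, every neighborhood `V` of `x`
and every neighborhood `W` of `f x` there is a nonempty open `U ⊆ V` with `f '' U ⊆ W`. -/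
def QuasiContinuous [TopologicalSpace X] [TopologicalSpace Y] (f : X → Y) : Prop :=
  ∀ x : X, ∀ V ∈ 𝓝 x, ∀ W ∈ 𝓝 (f x),
    ∃ U : Set X, IsOpen U ∧ U.Nonempty ∧ U ⊆ V ∧ f '' U ⊆ W

/-- A set `U` is conical at `x` if it is nonempty and contains the open segment from `x`
to each of its points. -/
def ConicalAt [AddCommGroup X] [Module ℝ X] (x : X) (U : Set X) : Prop :=
  U.Nonempty ∧ ∀ u ∈ U, ∀ t : ℝ, 0 < t → t < 1 → (1 - t) • x + t • u ∈ U

/-- Conical quasi-continuity. -/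
def ConicallyQuasiContinuous [AddCommGroup X] [Module ℝ X] [TopologicalSpace X]
    [TopologicalSpace Y] (f : X → Y) : Prop :=
  ∀ x : X, ∀ V : Set X, IsOpen V → ConicalAt x V → ∀ W : Set Y, IsOpen W → f x ∈ W →
    ∃ U : Set X, IsOpen U ∧ ConicalAt x U ∧ U ⊆ V ∧ f '' U ⊆ W

/-- `L` is an ℓ-neighborhood of `A`. -/
def IsLNbhd [AddCommGroup X] [Module ℝ X] (L A : Set X) : Prop :=
  ∀ a ∈ A, ∀ v : X, ∃ ε > (0 : ℝ), ∀ t : ℝ, 0 ≤ t → t < ε → a + t • v ∈ L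

/-- A set `A` is ℓ-miserable if `A ⊆ closure (X \ L)` for some closed ℓ-neighborhood `L`
of `A`. -/
def LMiserable [AddCommGroup X] [Module ℝ X] [TopologicalSpace X] (A : Set X) : Prop :=
  ∃ L : Set X, IsClosed L ∧ IsLNbhd L A ∧ A ⊆ closure Lᶜ

/-- A set is σ̄-ℓ-miserable if it is a countable union of closed ℓ-miserable sets. -/
def SigmaLMiserable [AddCommGroup X] [Module ℝ X] [TopologicalSpace X] (A : Set X) : Prop :=
  ∃ F : ℕ → Set X, (∀ n, IsClosed (F n) ∧ LMiserable (F n)) ∧ A = ⋃ n, F n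

/-- A function is of the first Baire class if it is a pointwise limit of a sequence of
continuous functions. -/
def BaireClassOne [TopologicalSpace X] [TopologicalSpace Y] (f : X → Y) : Prop :=
  ∃ g : ℕ → X → Y, (∀ n, Continuous (g n)) ∧
    ∀ x, Tendsto (fun n => g n x) atTop (𝓝 (f x))

/-- A topological space is cosmic if it is a continuous image of a separable metrizable
space. -/
def CosmicSpace (X : Type*) [TopologicalSpace X] : Prop :=
  ∃ (M : Type) (_ : TopologicalSpace M), MetrizableSpace M ∧ SeparableSpace M ∧
    ∃ g : M → X, Continuous g ∧ Function.Surjective g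

/-- A set `C` is strictly convex if for any distinct points of its closure the open segment
between them lies in `C`. -/
def StrictlyConvexSet [AddCommGroup X] [Module ℝ X] [TopologicalSpace X] (C : Set X) : Prop :=
  ∀ x ∈ closure C, ∀ y ∈ closure C, x ≠ y →
    ∀ t : ℝ, 0 < t → t < 1 → (1 - t) • x + t • y ∈ C

/-- A function is σ̄-continuous if the space is a countable union of closed sets on each of
which the function is continuous. -/
def SigmaContinuous [TopologicalSpace X] [TopologicalSpace Y] (f : X → Y) : Prop :=
  ∃ F : ℕ → Set X, (∀ n, IsClosed (F n)) ∧ (⋃ n, F n) = Set.univ ∧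
    ∀ n, ContinuousOn f (F n)

end Definitions

/-!
Fix `x`, an open `x`-conical `V` and an open `W ∋ f x`, and let `φ = g ∘ f` for a continuous
`g : Y → [0, 1]` with `g (f x) = 0` and `g = 1` off `W`. Let `Φ` be the set of points `z` whose
segment `(x, z]` meets `{φ > 1/2}`. Linear continuity makes `Φ` radially open, and `Φ` is a
countable union of homothetic images of the Baire-property set `{φ > 1/2}`. In a Baire
topological vector space a set radial at a point is never meagre, since countably many homothetic
copies of it cover the space; hence a radially open set with the Baire property is comeagre in its
closure. If `V ⊆ closure Φ`, a Baire category argument gives `z ∈ V` with `x + (z - x)/(n+1) ∈ Φ`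
for all `n`, contradicting `φ x = 0` and continuity of `φ` on the line through `x` and `z`.
Otherwise the cone spanned at `x` by the open set `V \ closure Φ` is the required set.
-/

open Topology Filter Set AffineMap

section Baire

variable {X : Type*} [TopologicalSpace X] {s t : Set X}

theorem HasBaireProperty.baireMeasurableSet (h : HasBaireProperty s) : BaireMeasurableSet s := by
  obtain ⟨O, hO, hOs⟩ := h
  refine hO.baireMeasurableSet.congr (eventuallyEq_set.2 ?_)
  filter_upwards [show (symmDiff O s)ᶜ ∈ residual X from hOs] with z hz
  simp only [mem_compl_iff, mem_symmDiff] at hz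
  tauto

theorem isMeagre_diff_of_residualEq (h : s =ᵇ t) : IsMeagre (s \ t) := by
  filter_upwards [eventuallyEq_set.1 h] with z hz hzst using hzst.2 (hz.1 hzst.1)

end Baire

section Homothety

variable {X : Type*} [AddCommGroup X] [Module ℝ X] {x z : X} {A V : Set X}

theorem homothety_eq_add_smul (x z : X) (t : ℝ) : homothety x t z = x + t • (z - x) := by
  rw [homothety_apply, vsub_eq_sub, vadd_eq_add, add_comm]

theorem ConicalAt.homothety_mem (hV : ConicalAt x V) (hz : z ∈ V) {t : ℝ} (ht : t ∈ Ioc 0 1) :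
    homothety x t z ∈ V := by
  rcases ht.2.eq_or_lt with rfl | ht1
  · simpa using hz
  · rw [homothety_eq_lineMap, lineMap_apply_module]
    exact hV.2 z hz t ht.1 ht1

def conicalHull (x : X) (A : Set X) : Set X :=
  ⋃ t ∈ Ioc (0 : ℝ) 1, homothety x t '' A

theorem mem_conicalHull {u : X} :
    u ∈ conicalHull x A ↔ ∃ t ∈ Ioc (0 : ℝ) 1, ∃ a ∈ A, homothety x t a = u := by
  simp only [conicalHull, mem_iUnion, mem_image, exists_prop]

theorem conicalAt_conicalHull (hA : A.Nonempty) : ConicalAt x (conicalHull x A) := by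
  obtain ⟨a, ha⟩ := hA
  refine ⟨⟨a, mem_conicalHull.2 ⟨1, ⟨one_pos, le_rfl⟩, a, ha, by simp⟩⟩, ?_⟩
  intro u hu t ht0 ht1
  obtain ⟨s, hs, a, ha, rfl⟩ := mem_conicalHull.1 hu
  refine mem_conicalHull.2 ⟨t * s, ⟨mul_pos ht0 hs.1, mul_le_one₀ ht1.le hs.1.le hs.2⟩, a, ha, ?_⟩
  rw [homothety_mul_apply, homothety_eq_lineMap x t, lineMap_apply_module]

theorem ConicalAt.conicalHull_subset (hV : ConicalAt x V) (hAV : A ⊆ V) :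
    conicalHull x A ⊆ V := by
  simp only [conicalHull, iUnion_subset_iff, image_subset_iff]
  exact fun t ht a ha => hV.homothety_mem (hAV ha) ht

variable [TopologicalSpace X] [IsTopologicalAddGroup X] [ContinuousSMul ℝ X]

theorem IsOpen.conicalHull (hA : IsOpen A) (x : X) : IsOpen (conicalHull x A) :=
  isOpen_biUnion fun t ht => homothety_isOpenMap x t ht.1.ne' A hA

theorem IsLNbhd.inter_isOpen {L U : Set X} (hL : IsLNbhd L A) (hU : IsOpen U) (hAU : A ⊆ U) :
    IsLNbhd (L ∩ U) A := by
  intro a ha v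
  obtain ⟨ε₁, hε₁, hL⟩ := hL a ha v
  have hline : (fun t : ℝ => a + t • v) ⁻¹' U ∈ 𝓝 0 :=
    (hU.preimage (by fun_prop)).mem_nhds (by simpa using hAU ha)
  obtain ⟨ε₂, hε₂, hU⟩ := Metric.mem_nhds_iff.1 hline
  refine ⟨min ε₁ ε₂, lt_min hε₁ hε₂, fun t ht0 htε => ⟨?_, ?_⟩⟩
  · exact hL t ht0 (htε.trans_le (min_le_left _ _))
  · exact hU (by simpa [abs_of_nonneg ht0] using htε.trans_le (min_le_right _ _))

variable [BaireSpace X]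

theorem IsLNbhd.not_isMeagre {S : Set X} {c : X} (h : IsLNbhd S {c}) : ¬ IsMeagre S := by
  intro hS
  have hcover : (univ : Set X) ⊆ ⋃ n : ℕ, homothety c (1 / (n + 1 : ℝ)) ⁻¹' S := by
    intro w _
    obtain ⟨ε, hε, hseg⟩ := h c rfl (w - c)
    obtain ⟨n, hn⟩ := exists_nat_one_div_lt hε
    exact mem_iUnion.2 ⟨n, by
      rw [mem_preimage, homothety_eq_add_smul]; exact hseg _ (by positivity) hn⟩
  refine not_isMeagre_of_isOpen isOpen_univ univ_nonempty
    ((isMeagre_iUnion fun n => ?_).mono hcover)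
  exact hS.preimage_of_isOpenMap (homothety_continuous _ _)
    (homothety_isOpenMap _ _ (by positivity))

theorem IsLNbhd.isMeagre_closure_diff {Φ : Set X} (hrad : IsLNbhd Φ Φ)
    (hΦ : BaireMeasurableSet Φ) : IsMeagre (closure Φ \ Φ) := by
  obtain ⟨u, hu, hΦu⟩ := hΦ.residualEq_isOpen
  have hΦ_sub : Φ ⊆ closure u := by
    intro z hz
    by_contra hzu
    have hrad_z : IsLNbhd (Φ ∩ (closure u)ᶜ) {z} :=
      IsLNbhd.inter_isOpen (fun a ha => hrad a (mem_singleton_iff.1 ha ▸ hz))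
        isClosed_closure.isOpen_compl (singleton_subset_iff.2 hzu)
    refine hrad_z.not_isMeagre ((isMeagre_diff_of_residualEq hΦu).mono ?_)
    exact fun w hw => ⟨hw.1, fun hwu => hw.2 (subset_closure hwu)⟩
  have hcl : closure u =ᵇ Φ := (closure_residualEq hu.isLocallyClosed).trans hΦu.symm
  exact (isMeagre_diff_of_residualEq hcl).mono
    (sdiff_subset_sdiff_left (closure_minimal hΦ_sub isClosed_closure))

theorem ConicalAt.exists_forall_homothety_mem {Φ : Set X} (hVo : IsOpen V) (hV : ConicalAt x V)
    (hVΦ : IsMeagre (V \ Φ)) (t : ℕ → ℝ) (ht : ∀ n, t n ∈ Ioc 0 1) :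
    ∃ z ∈ V, ∀ n, homothety x (t n) z ∈ Φ := by
  set M := ⋃ n, homothety x (t n) ⁻¹' (V \ Φ)
  have hM : IsMeagre M := isMeagre_iUnion fun n =>
    hVΦ.preimage_of_isOpenMap (homothety_continuous _ _) (homothety_isOpenMap _ _ (ht n).1.ne')
  obtain ⟨z, hzV, hzM⟩ : (V \ M).Nonempty := by
    by_contra h
    rw [not_nonempty_iff_eq_empty, sdiff_eq_empty] at h
    exact not_isMeagre_of_isOpen hVo hV.1 (hM.mono h)
  refine ⟨z, hzV, fun n => ?_⟩
  by_contra hn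
  exact hzM (mem_iUnion.2 ⟨n, hV.homothety_mem hzV (ht n), hn⟩)

end Homothety

section SegmentSuperlevelSet

variable {X : Type*} [AddCommGroup X] [Module ℝ X] [TopologicalSpace X] {φ : X → ℝ} {a : ℝ}

def segmentSuperlevelSet (x : X) (φ : X → ℝ) (a : ℝ) : Set X :=
  {z | ∃ t ∈ Ioc (0 : ℝ) 1, a < φ (homothety x t z)}

theorem LinearlyContinuous.continuous_homothety (hφ : LinearlyContinuous φ) (x z : X) :
    Continuous fun t : ℝ => φ (homothety x t z) := by
  simpa only [homothety_eq_add_smul] using hφ x (z - x)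

theorem LinearlyContinuous.isLNbhd_segmentSuperlevelSet (hφ : LinearlyContinuous φ) (x : X) :
    IsLNbhd (segmentSuperlevelSet x φ a) (segmentSuperlevelSet x φ a) := by
  rintro z ⟨t, ht, hzt⟩ v
  have hline : ∀ s : ℝ, homothety x t (z + s • v) = homothety x t z + s • (t • v) := by
    intro s
    simp only [homothety_eq_add_smul]
    module
  have hc : Continuous fun s : ℝ => φ (homothety x t (z + s • v)) := by
    simpa only [hline] using hφ (homothety x t z) (t • v)
  have hopen : IsOpen {s : ℝ | a < φ (homothety x t (z + s • v))} :=
    isOpen_lt continuous_const hc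
  obtain ⟨ε, hε, hball⟩ :=
    Metric.mem_nhds_iff.1 (hopen.mem_nhds (by simpa using hzt) : _ ∈ 𝓝 (0 : ℝ))
  exact ⟨ε, hε, fun s hs0 hsε => ⟨t, ht, hball (by simpa [abs_of_nonneg hs0] using hsε)⟩⟩

theorem LinearlyContinuous.segmentSuperlevelSet_eq_iUnion_rat (hφ : LinearlyContinuous φ)
    (x : X) : segmentSuperlevelSet x φ a =
      ⋃ (q : ℚ) (_ : (q : ℝ) ∈ Ioc 0 1), homothety x (q : ℝ) ⁻¹' {z | a < φ z} := by
  ext z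
  simp only [segmentSuperlevelSet, mem_iUnion, mem_preimage, exists_prop]
  refine ⟨fun ⟨t, ht, hat⟩ => ?_, fun ⟨q, hq, haq⟩ => ⟨q, hq, haq⟩⟩
  have hopen : IsOpen {s : ℝ | a < φ (homothety x s z)} :=
    isOpen_lt continuous_const (hφ.continuous_homothety x z)
  have ht_cl : t ∈ closure (Ioo 0 t) := by
    rw [closure_Ioo ht.1.ne]
    exact ⟨ht.1.le, le_rfl⟩
  obtain ⟨q, hq, hq0, hqt⟩ := Rat.denseRange_cast.exists_mem_open (hopen.inter isOpen_Ioo)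
    (mem_closure_iff.1 ht_cl _ hopen hat)
  exact ⟨q, ⟨hq0, hqt.le.trans ht.2⟩, hq⟩

theorem LinearlyContinuous.eventually_homothety_notMem_segmentSuperlevelSet
    (hφ : LinearlyContinuous φ) {x : X} (hx : φ x < a) (z : X) :
    ∀ᶠ t in 𝓝 (0 : ℝ), homothety x t z ∉ segmentSuperlevelSet x φ a := by
  have h0 : ∀ᶠ s in 𝓝 (0 : ℝ), φ (homothety x s z) < a :=
    (hφ.continuous_homothety x z).continuousAt.eventually_lt continuousAt_const (by simpa using hx)
  obtain ⟨ε, hε, hball⟩ := Metric.eventually_nhds_iff.1 h0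
  filter_upwards [Metric.ball_mem_nhds 0 hε] with t ht ⟨s, hs, has⟩
  rw [← homothety_mul_apply] at has
  refine lt_asymm has (hball ?_)
  rw [Metric.mem_ball, Real.dist_0_eq_abs] at ht
  rw [Real.dist_0_eq_abs, abs_mul, abs_of_pos hs.1]
  exact (mul_le_of_le_one_left (abs_nonneg t) hs.2).trans_lt ht

variable [IsTopologicalAddGroup X] [ContinuousSMul ℝ X]

theorem LinearlyContinuous.baireMeasurableSet_segmentSuperlevelSet (hφ : LinearlyContinuous φ)
    (x : X) (hB : BaireMeasurableSet {z | a < φ z}) :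
    BaireMeasurableSet (segmentSuperlevelSet x φ a) := by
  rw [hφ.segmentSuperlevelSet_eq_iUnion_rat x]
  exact .iUnion fun q => .iUnion fun hq =>
    hB.preimage (homothety_continuous _ _) (homothety_isOpenMap _ _ hq.1.ne')

end SegmentSuperlevelSet

theorem stmt14_general {X Y : Type*} [AddCommGroup X] [Module ℝ X] [TopologicalSpace X]
    [IsTopologicalAddGroup X] [ContinuousSMul ℝ X] [BaireSpace X]
    [TopologicalSpace Y] [CompletelyRegularSpace Y]
    (f : X → Y) (hBP : BPMeasurable f) (hlin : LinearlyContinuous f) :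
    ConicallyQuasiContinuous f := by
  intro x V hVo hV W hWo hxW
  obtain ⟨g, hgc, hgx, hgW⟩ := CompletelyRegularSpace.completely_regular (f x) Wᶜ
    hWo.isClosed_compl (by simpa using hxW)
  set φ : X → ℝ := fun z => g (f z)
  have hφ : LinearlyContinuous φ := fun z v => continuous_subtype_val.comp (hgc.comp (hlin z v))
  have hφW : ∀ z, φ z < 1 → f z ∈ W := fun z hz => by
    by_contra hzW
    simp [φ, hgW hzW] at hz
  have hB : BaireMeasurableSet {z | 1 / 2 < φ z} :=
    (hBP _ ⟨fun y => g y, by fun_prop, Ioi (1 / 2), isOpen_Ioi, rfl⟩).baireMeasurableSet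
  set Φ := segmentSuperlevelSet x φ (1 / 2)
  by_cases hVΦ : V ⊆ closure Φ
  · exfalso
    have hφx : φ x < 1 / 2 := by norm_num [φ, hgx]
    have hΦ : IsMeagre (closure Φ \ Φ) :=
      (hφ.isLNbhd_segmentSuperlevelSet x).isMeagre_closure_diff
        (hφ.baireMeasurableSet_segmentSuperlevelSet x hB)
    obtain ⟨z, -, hz⟩ := hV.exists_forall_homothety_mem hVo
      (hΦ.mono (sdiff_subset_sdiff_left hVΦ)) (fun n => 1 / (n + 1))
      fun n => ⟨by positivity, div_le_one_of_le₀ (by simp) (by positivity)⟩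
    obtain ⟨n, hn⟩ := (tendsto_one_div_add_atTop_nhds_zero_nat.eventually
      (hφ.eventually_homothety_notMem_segmentSuperlevelSet hφx z)).exists
    exact hn (hz n)
  · obtain ⟨z, hzV, hzΦ⟩ := not_subset.1 hVΦ
    refine ⟨conicalHull x (V \ closure Φ), (hVo.sdiff isClosed_closure).conicalHull x,
      conicalAt_conicalHull ⟨z, hzV, hzΦ⟩, hV.conicalHull_subset sdiff_subset, ?_⟩
    rintro _ ⟨u, hu, rfl⟩
    obtain ⟨t, ht, a, ⟨-, ha⟩, rfl⟩ := mem_conicalHull.1 hu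
    exact hφW _ ((not_lt.1 fun h => ha (subset_closure ⟨t, ht, h⟩)).trans_lt (by norm_num))

/-- Every BP-measurable linearly continuous function from a Baire topological vector space
to a Tychonoff space is conically quasi-continuous. -/
theorem stmt14 {X Y : Type*} [AddCommGroup X] [Module ℝ X] [TopologicalSpace X]
    [IsTopologicalAddGroup X] [ContinuousSMul ℝ X] [T2Space X] [BaireSpace X]
    [TopologicalSpace Y] [CompletelyRegularSpace Y] [T2Space Y]
    (f : X → Y) (hBP : BPMeasurable f) (hlin : LinearlyContinuous f) :
    ConicallyQuasiContinuous f :=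
  stmt14_general f hBP hlin
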